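/- Let α be the unique formal power series over ℚ with constant term 0 satisfying α·(1-α)·(1-2α) = X. Then for every integer r, the identity (1-2α)^{2r} = 1 - Σ_{n≥1} 2^{2n}·(r/n)·C(3n/2 - r - 1, n-1)·X^n holds in ℚ[[X]], where C(3n/2 - r - 1, n-1) is the generalized binomial coefficient with rational upper argument. -/

import Mathlib

open PowerSeries Finset

/-- Generalized binomial coefficient `C(q, k) = q(q-1)⋯(q-k+1)/k!` for rational `q`. -/
noncomputable def qchoose (q : ℚ) (k : ℕ) : ℚ :=
  (∏ j ∈ Finset.range k, (q - j)) / (k.factorial : ℚ)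

/-- Integer power of a power series over `ℚ`: for `r < 0` this is the
multiplicative inverse of the `(-r)`-th power. -/
noncomputable def zpowPS (a : PowerSeries ℚ) (r : ℤ) : PowerSeries ℚ :=
  a ^ r.toNat * (a ^ (-r).toNat)⁻¹

/-!
Put `u = 1 - 2α`; the hypothesis becomes `u ^ 3 = u - 4X` with `u(0) = 1`, and the claim is the
Lagrange-inversion formula for the coefficients of `u ^ i`, `i = 2r`, which we prove for every
integer `i`. Differentiating the cubic gives `2 u u' = 12 X u' - 4 u`, hence
`2j (u ^ (j + 1))' = 12 (j + 1) X (u ^ j)' - 4 j (j + 1) u ^ j`, i.e. on coefficients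
`2j (n + 1) c(j + 1, n + 1) = 4 (j + 1) (3n - j) c(j, n)`. The closed form obeys the same recurrence
by the absorption identity for binomial coefficients. It determines `c(i, n + 1)` from `c(i - 1, n)`
except at `i = 1`, where `u = u ^ 3 + 4X` reduces to `i = 3`; induction on `n` concludes.
-/

section SeriesLemmas

variable {R : Type*} [CommRing R]

lemma coeff_intCast_mul (k : ℤ) (f : R⟦X⟧) (n : ℕ) :
    coeff n ((k : R⟦X⟧) * f) = k * coeff n f := by
  rw [← map_intCast (C : R →+* R⟦X⟧), coeff_C_mul]

lemma coeff_X_mul_derivative (f : R⟦X⟧) (n : ℕ) :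
    coeff n (X * d⁄dX R f) = n * coeff n f := by
  cases n with
  | zero => simp
  | succ n => rw [coeff_succ_X_mul, coeff_derivative]; push_cast; ring

lemma constantCoeff_zpow (u : R⟦X⟧ˣ) (h1 : constantCoeff (u : R⟦X⟧) = 1) (i : ℤ) :
    constantCoeff (↑(u ^ i) : R⟦X⟧) = 1 := by
  have h : Units.map (constantCoeff : R⟦X⟧ →+* R).toMonoidHom u = 1 := Units.ext h1
  calc constantCoeff (↑(u ^ i) : R⟦X⟧)
      = ↑(Units.map (constantCoeff : R⟦X⟧ →+* R).toMonoidHom (u ^ i)) := rfl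
    _ = 1 := by rw [map_zpow, h, one_zpow, Units.val_one]

lemma derivative_zpow_mul_self (u : R⟦X⟧ˣ) (j : ℤ) :
    d⁄dX R ↑(u ^ j) * u = j * ↑(u ^ j) * d⁄dX R u := by
  induction j using Int.induction_on with
  | zero => simp
  | succ k ih =>
    rw [zpow_add_one, Units.val_mul, Derivation.leibniz, smul_eq_mul, smul_eq_mul]
    push_cast at ih ⊢
    linear_combination (u : R⟦X⟧) * ih
  | pred k ih =>
    have hinv : (↑u⁻¹ : R⟦X⟧) * u = 1 := u.inv_mul
    rw [zpow_sub_one, Units.val_mul, Derivation.leibniz, smul_eq_mul, smul_eq_mul,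
      derivative_inv]
    push_cast at ih ⊢
    linear_combination (↑u⁻¹ : R⟦X⟧) * ih - (↑(u ^ (-(k : ℤ))) * ↑u⁻¹ * d⁄dX R u) * hinv

lemma mul_derivative_of_cube_eq {u : R⟦X⟧} (hu : u ^ 3 = u - 4 * X) :
    2 * (u * d⁄dX R u) = 12 * X * d⁄dX R u - 4 * u := by
  have h4 : d⁄dX R (4 : R⟦X⟧) = 0 := by simpa using (d⁄dX R).map_natCast 4
  have hD : 3 * (u ^ 2 * d⁄dX R u) = d⁄dX R u - 4 := by
    simpa [derivative_pow, h4] using congrArg (d⁄dX R) hu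
  linear_combination u * hD - 3 * d⁄dX R u * hu

lemma derivative_zpow_add_one_of_cube_eq {u : R⟦X⟧ˣ}
    (hu : (u : R⟦X⟧) ^ 3 = (u : R⟦X⟧) - 4 * X) (j : ℤ) :
    ((2 * j : ℤ) : R⟦X⟧) * d⁄dX R ↑(u ^ (j + 1))
      = ((12 * (j + 1) : ℤ) : R⟦X⟧) * (X * d⁄dX R ↑(u ^ j))
        - ((4 * j * (j + 1) : ℤ) : R⟦X⟧) * (↑(u ^ j) : R⟦X⟧) := by
  rw [← u.mul_left_inj]
  have e1 := derivative_zpow_mul_self u (j + 1)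
  have e2 : (↑(u ^ (j + 1)) : R⟦X⟧) = ↑(u ^ j) * (u : R⟦X⟧) := by
    rw [zpow_add_one, Units.val_mul]
  have e3 := derivative_zpow_mul_self u j
  have e4 := mul_derivative_of_cube_eq hu
  push_cast at e1 e3 ⊢
  linear_combination (2 * (j : R⟦X⟧)) * e1 + (2 * (j : R⟦X⟧) * ((j : R⟦X⟧) + 1) * d⁄dX R u) * e2
    + ((j : R⟦X⟧) * ((j : R⟦X⟧) + 1) * (↑(u ^ j) : R⟦X⟧)) * e4 - (12 * ((j : R⟦X⟧) + 1) * X) * e3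

lemma coeff_zpow_add_one_succ {u : R⟦X⟧ˣ} (hu : (u : R⟦X⟧) ^ 3 = (u : R⟦X⟧) - 4 * X)
    (j : ℤ) (n : ℕ) :
    2 * j * (n + 1) * coeff (n + 1) (↑(u ^ (j + 1)) : R⟦X⟧)
      = 4 * (j + 1) * (3 * n - j) * coeff n (↑(u ^ j) : R⟦X⟧) := by
  have h := congrArg (coeff n) (derivative_zpow_add_one_of_cube_eq hu j)
  rw [map_sub, coeff_intCast_mul, coeff_intCast_mul, coeff_intCast_mul, coeff_X_mul_derivative,
    coeff_derivative] at h
  push_cast at h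
  linear_combination h

end SeriesLemmas

lemma succ_mul_qchoose_succ (q : ℚ) (k : ℕ) :
    (k + 1) * qchoose q (k + 1) = q * qchoose (q - 1) k := by
  have hprod : ∏ j ∈ range k, (q - (j + 1 : ℕ)) = ∏ j ∈ range k, (q - 1 - j) :=
    prod_congr rfl fun j _ => by push_cast; ring
  rw [qchoose, qchoose, prod_range_succ', hprod, Nat.factorial_succ]
  push_cast
  field_simp
  ring

lemma sub_mul_qchoose (q : ℚ) (k : ℕ) :
    (q - k) * qchoose q k = q * qchoose (q - 1) k := by
  rw [← succ_mul_qchoose_succ, qchoose, qchoose, prod_range_succ, Nat.factorial_succ]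
  push_cast
  field_simp

/-- For `n ≥ 1`, `cubicPowCoeff i n = -4 ^ n * (i / 2n) * C((3n - i) / 2 - 1, n - 1)`. -/
noncomputable def cubicPowCoeff (i : ℤ) : ℕ → ℚ
  | 0 => 1
  | n + 1 => -4 ^ (n + 1) * (i / (2 * (n + 1))) * qchoose ((3 * n + 1 - i) / 2) n

lemma cubicPowCoeff_add_one_succ (j : ℤ) (n : ℕ) :
    2 * j * (n + 1) * cubicPowCoeff (j + 1) (n + 1)
      = 4 * (j + 1) * (3 * n - j) * cubicPowCoeff j n := by
  cases n with
  | zero =>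
    simp only [cubicPowCoeff, qchoose, prod_range_zero, Nat.factorial_zero]
    push_cast
    ring
  | succ n =>
    have h : qchoose ((3 * n + 3 - j) / 2) (n + 1)
        = (3 * n + 3 - j) / 2 * qchoose ((3 * n + 3 - j) / 2 - 1) n / (n + 1) := by
      rw [← succ_mul_qchoose_succ]; field_simp
    simp only [cubicPowCoeff]
    push_cast
    rw [show (3 * ((n : ℚ) + 1) + 1 - (j + 1)) / 2 = (3 * n + 3 - j) / 2 by ring,
      show (3 * (n : ℚ) + 1 - j) / 2 = (3 * n + 3 - j) / 2 - 1 by ring, h]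
    field_simp
    ring

lemma cubicPowCoeff_one_succ (n : ℕ) :
    cubicPowCoeff 1 (n + 1) = cubicPowCoeff 3 (n + 1) + if n = 0 then 4 else 0 := by
  rcases eq_or_ne n 0 with rfl | hn
  · norm_num [cubicPowCoeff, qchoose]
  · have hn' : (n : ℚ) ≠ 0 := by exact_mod_cast hn
    have h : qchoose (3 * n / 2) n = 3 * qchoose (3 * n / 2 - 1) n := by
      have := sub_mul_qchoose (3 * n / 2) n
      rw [show 3 * (n : ℚ) / 2 - n = n / 2 by ring] at this
      apply mul_left_cancel₀ (div_ne_zero hn' two_ne_zero)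
      rw [this]
      ring
    simp only [cubicPowCoeff, if_neg hn]
    push_cast
    rw [show (3 * (n : ℚ) + 1 - 1) / 2 = 3 * n / 2 by ring,
      show (3 * (n : ℚ) + 1 - 3) / 2 = 3 * n / 2 - 1 by ring, h]
    ring

theorem coeff_zpow_of_cube_eq {u : ℚ⟦X⟧ˣ} (h1 : constantCoeff (u : ℚ⟦X⟧) = 1)
    (hu : (u : ℚ⟦X⟧) ^ 3 = (u : ℚ⟦X⟧) - 4 * X) (n : ℕ) (i : ℤ) :
    coeff n (↑(u ^ i) : ℚ⟦X⟧) = cubicPowCoeff i n := by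
  induction n generalizing i with
  | zero => simpa [cubicPowCoeff] using constantCoeff_zpow u h1 i
  | succ n ih =>
    have hne : ∀ i ≠ 1, coeff (n + 1) (↑(u ^ i) : ℚ⟦X⟧) = cubicPowCoeff i (n + 1) := by
      intro i hi
      obtain ⟨j, rfl⟩ : ∃ j, i = j + 1 := ⟨i - 1, by ring⟩
      have hj : (2 * j * (n + 1) : ℚ) ≠ 0 := by
        have : (j : ℚ) ≠ 0 := by exact_mod_cast fun h => hi (by omega)
        positivity
      apply mul_left_cancel₀ hj
      rw [coeff_zpow_add_one_succ hu, cubicPowCoeff_add_one_succ, ih]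
    rcases eq_or_ne i 1 with rfl | hi
    · have h : coeff (n + 1) (u : ℚ⟦X⟧) = coeff (n + 1) (↑(u ^ (3 : ℤ)) : ℚ⟦X⟧)
          + if n = 0 then 4 else 0 := by
        rw [zpow_ofNat, Units.val_pow_eq_pow_val, hu, map_sub, ← map_ofNat C 4, coeff_C_mul, coeff_X]
        by_cases hn : n = 0 <;> simp [hn]
      rw [zpow_one, h, hne 3 (by norm_num), cubicPowCoeff_one_succ]
    · exact hne i hi

lemma inv_val_unit {k : Type*} [Field k] (v : k⟦X⟧ˣ) : (v : k⟦X⟧)⁻¹ = ↑v⁻¹ :=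
  (PowerSeries.inv_eq_iff_mul_eq_one (v.isUnit.map constantCoeff).ne_zero).2 v.inv_mul

lemma zpowPS_val_unit (u : ℚ⟦X⟧ˣ) (r : ℤ) : zpowPS u r = ↑(u ^ r) := by
  cases r with
  | ofNat m => simp [zpowPS]
  | negSucc m =>
    rw [zpowPS, zpow_negSucc, ← inv_val_unit, Units.val_pow_eq_pow_val, Int.toNat_negSucc,
      Int.neg_negSucc]
    simp

theorem one_sub_two_alpha_pow (α : PowerSeries ℚ)
    (h0 : PowerSeries.constantCoeff α = 0)
    (hα : α * (1 - α) * (1 - 2 * α) = PowerSeries.X)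
    (r : ℤ) :
    zpowPS (1 - 2 * α) (2 * r)
      = 1 - PowerSeries.mk (fun n =>
          if n = 0 then 0
          else 2 ^ (2 * n) * ((r : ℚ) / (n : ℚ)) * qchoose (3 * n / 2 - r - 1) (n - 1)) := by
  have hc : constantCoeff (1 - 2 * α) = 1 := by simp [h0]
  obtain ⟨u, hu⟩ : IsUnit (1 - 2 * α) := isUnit_iff_constantCoeff.2 (hc ▸ isUnit_one)
  have hcube : (u : ℚ⟦X⟧) ^ 3 = (u : ℚ⟦X⟧) - 4 * X := by rw [hu]; linear_combination (-4) * hα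
  rw [← hu, zpowPS_val_unit]
  ext n
  rw [coeff_zpow_of_cube_eq (hu ▸ hc) hcube, map_sub, coeff_one, coeff_mk]
  cases n with
  | zero => simp [cubicPowCoeff]
  | succ n =>
    simp only [cubicPowCoeff, Nat.add_sub_cancel, Nat.add_one_ne_zero, if_false]
    push_cast
    rw [show (3 * ((n : ℚ) + 1) / 2 - r - 1) = (3 * n + 1 - 2 * r) / 2 by ring, pow_mul]
    field_simp
    ring
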